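/- arXiv:2110.02783 — 3 statements merged into one kernel-verified Lean document; each statement's English description precedes it below -/
import Mathlib

section
/- Let N be a sound deterministic negotiation and w ∈ Act* a word such that for every process p the projection w|_p labels a local path in N from n_init to n_fin. Then w is a successful execution: w ∈ L(N). -/
universe u v w

variable {P : Type u} {A : Type v}

/-- One swap of two adjacent independent letters. -/
def SwapStep (dom : A → Set P) (u v : List A) : Prop :=
  ∃ x y : List A, ∃ a b : A, dom a ∩ dom b = ∅ ∧
    u = x ++ a :: b :: y ∧ v = x ++ b :: a :: y

/-- Mazurkiewicz trace equivalence: reflexive-transitive-symmetric closure of swaps. -/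
def TraceEq (dom : A → Set P) : List A → List A → Prop :=
  Relation.EqvGen (SwapStep dom)

open Classical in
/-- Projection of a word on a process `p`: keep letters whose domain contains `p`. -/
noncomputable def proj (dom : A → Set P) (p : P) : List A → List A
  | [] => []
  | a :: w => if p ∈ dom a then a :: proj dom p w else proj dom p w

/-- A word `t` is co-prime with minimal letter `b` if every trace-equivalent word starts with `b`. -/
def CoPrime (dom : A → Set P) (t : List A) (b : A) : Prop :=
  ∀ v, TraceEq dom t v → ∃ v', v = b :: v'

/-- A `(b,p)`-step: `s = b·s'` is co-prime with minimal letter `b`, `p ∈ dom b`,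
and `b` is the only letter of `s` involving `p`. -/
def IsStep (dom : A → Set P) (s : List A) (b : A) (p : P) : Prop :=
  p ∈ dom b ∧ CoPrime dom s b ∧ ∃ s', s = b :: s' ∧ ∀ a ∈ s', p ∉ dom a

/-- A (deterministic) negotiation diagram. -/
structure Negotiation (P : Type u) (A : Type v) where
  Node : Type w
  dnode : Node → Set P
  ninit : Node
  nfin : Node
  tr : Node → A → P → Option Node

namespace Negotiation

/-- Well-formedness conditions of a negotiation diagram over distributed alphabet `dom`. -/
def WellFormed (N : Negotiation P A) (dom : A → Set P) : Prop :=
  (∀ n, (N.dnode n).Nonempty) ∧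
  N.dnode N.ninit = Set.univ ∧
  N.dnode N.nfin = Set.univ ∧
  (∀ n a p n', N.tr n a p = some n' →
    N.dnode n = dom a ∧ p ∈ dom a ∧ p ∈ N.dnode n' ∧
    ∀ q ∈ dom a, (N.tr n a q).isSome)

/-- Node `n` is enabled in configuration `C`. -/
def Enabled (N : Negotiation P A) (n : N.Node) (C : P → N.Node) : Prop :=
  ∀ p ∈ N.dnode n, C p = n

/-- `n` is the unique node enabled in `C`. -/
def UniqueEnabled (N : Negotiation P A) (n : N.Node) (C : P → N.Node) : Prop :=
  N.Enabled n C ∧ ∀ m, N.Enabled m C → m = n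

/-- A step of a negotiation on action `a` between configurations. -/
def Step (N : Negotiation P A) (dom : A → Set P) (C : P → N.Node) (a : A)
    (C' : P → N.Node) : Prop :=
  ∃ n, N.Enabled n C ∧ (∀ p ∈ dom a, N.tr n a p = some (C' p)) ∧
    ∀ p, p ∉ dom a → C' p = C p

/-- Execution of a word between configurations. -/
def Run (N : Negotiation P A) (dom : A → Set P) :
    (P → N.Node) → List A → (P → N.Node) → Prop
  | C, [], C' => C = C'
  | C, a :: word, C'' => ∃ C', N.Step dom C a C' ∧ N.Run dom C' word C''

/-- The initial configuration: all processes in the initial node. -/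
def Cinit (N : Negotiation P A) : P → N.Node := fun _ => N.ninit

/-- The final configuration: all processes in the final node. -/
def Cfin (N : Negotiation P A) : P → N.Node := fun _ => N.nfin

/-- The language of successful executions of `N`. -/
def Lang (N : Negotiation P A) (dom : A → Set P) (word : List A) : Prop :=
  N.Run dom N.Cinit word N.Cfin

/-- Soundness: every execution from the initial configuration extends to a successful one. -/
def Sound (N : Negotiation P A) (dom : A → Set P) : Prop :=
  ∀ word C, N.Run dom N.Cinit word C → ∃ v, N.Run dom C v N.Cfin

/-- A local path of process `p` in the graph of `N`. -/
def PPath (N : Negotiation P A) (p : P) : N.Node → List A → N.Node → Prop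
  | n, [], n' => n = n'
  | n, a :: word, n'' => ∃ n', N.tr n a p = some n' ∧ N.PPath p n' word n''

/-- A local path in the graph of `N`, labelled over the alphabet `A_dom` of pairs `(a,p)`. -/
def GPath (N : Negotiation P A) : N.Node → List (A × P) → N.Node → Prop
  | n, [], n' => n = n'
  | n, x :: word, n'' => ∃ n', N.tr n x.1 x.2 = some n' ∧ N.GPath n' word n''

/-- `Paths(N)`: labels of local paths from the initial to the final node. -/
def PathsL (N : Negotiation P A) : Set (List (A × P)) :=
  { w | N.GPath N.ninit w N.nfin }

end Negotiation

lemma run_append {N : Negotiation P A} {dom : A → Set P} :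
    ∀ {u v : List A} {C C' C'' : P → N.Node},
      N.Run dom C u C' → N.Run dom C' v C'' → N.Run dom C (u ++ v) C''
  | [], v, C, C', C'', h1, h2 => by
      cases h1; exact h2
  | a :: u, v, C, C', C'', h1, h2 => by
      obtain ⟨C₁, hs, hr⟩ := h1
      exact ⟨C₁, hs, run_append hr h2⟩

/-- In a run to the final configuration, the processes of `dom a` that all sit on
nodes with domain `dom a` must all sit on the same node. -/
lemma sync_lemma (dom : A → Set P) (hdom : ∀ a, (dom a).Nonempty)
    (N : Negotiation P A) (hWF : N.WellFormed dom) {a : A} :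
    ∀ (v : List A) {C : P → N.Node}, N.Run dom C v N.Cfin →
      (∀ p ∈ dom a, N.dnode (C p) = dom a) →
      ∀ p ∈ dom a, ∀ q ∈ dom a, C p = C q
  | [], C, hrun, hd => by
      cases hrun; intro p _ q _; rfl
  | b :: v, C, hrun, hd => by
      obtain ⟨C₁, ⟨n, hen, htr, hfix⟩, hrun'⟩ := hrun
      obtain ⟨r, hr⟩ := hdom b
      have hwf := (hWF.2.2.2 n b r _ (htr r hr))
      have hnb : N.dnode n = dom b := hwf.1
      by_cases hex : ∃ s, s ∈ dom a ∧ s ∈ dom b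
      · obtain ⟨s, hsa, hsb⟩ := hex
        have hcs : C s = n := hen s (by rw [hnb]; exact hsb)
        have hab : dom a = dom b := by
          rw [← hd s hsa, hcs, hnb]
        intro p hp q hq
        have hcp : C p = n := hen p (by rw [hnb, ← hab]; exact hp)
        have hcq : C q = n := hen q (by rw [hnb, ← hab]; exact hq)
        rw [hcp, hcq]
      · push_neg at hex
        have hfix' : ∀ p ∈ dom a, C₁ p = C p := fun p hp => hfix p (hex p hp)
        have hd' : ∀ p ∈ dom a, N.dnode (C₁ p) = dom a := fun p hp => by
          rw [hfix' p hp]; exact hd p hp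
        intro p hp q hq
        rw [← hfix' p hp, ← hfix' q hq]
        exact sync_lemma dom hdom N hWF v hrun' hd' p hp q hq

lemma main_lemma (dom : A → Set P) (hdom : ∀ a, (dom a).Nonempty)
    (N : Negotiation P A) (hWF : N.WellFormed dom) (hS : N.Sound dom) :
    ∀ (w : List A) (C : P → N.Node) (u : List A), N.Run dom N.Cinit u C →
      (∀ p, N.PPath p (C p) (proj dom p w) N.nfin) → N.Run dom C w N.Cfin
  | [], C, u, hu, h => by
      have : C = N.Cfin := funext fun p => by
        have := h p
        simpa [proj, Negotiation.PPath, Negotiation.Cfin] using this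
      simpa [Negotiation.Run] using this
  | a :: w, C, u, hu, h => by
      -- for processes in dom a, the projection starts with a
      have spec : ∀ p, p ∈ dom a →
          ∃ n', N.tr (C p) a p = some n' ∧ N.PPath p n' (proj dom p w) N.nfin := by
        intro p hp
        have := h p
        rw [proj, if_pos hp] at this
        exact this
      -- all processes of dom a are on the same node
      obtain ⟨v, hv⟩ := hS u C hu
      have hd : ∀ p ∈ dom a, N.dnode (C p) = dom a := fun p hp => by
        obtain ⟨n', htr, -⟩ := spec p hp
        exact (hWF.2.2.2 _ a p _ htr).1
      have hsync := sync_lemma dom hdom N hWF v hv hd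
      obtain ⟨p₀, hp₀⟩ := hdom a
      -- the successor configuration
      classical
      let C' : P → N.Node := fun p =>
        if hp : p ∈ dom a then Classical.choose (spec p hp) else C p
      have hC'1 : ∀ p (hp : p ∈ dom a), N.tr (C p) a p = some (C' p) ∧
          N.PPath p (C' p) (proj dom p w) N.nfin := by
        intro p hp
        simpa only [C', dif_pos hp] using Classical.choose_spec (spec p hp)
      have hC'2 : ∀ p, p ∉ dom a → C' p = C p := fun p hp => by
        simp only [C', dif_neg hp]
      have hstep : N.Step dom C a C' := by
        refine ⟨C p₀, ?_, ?_, hC'2⟩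
        · intro q hq
          have hq' : q ∈ dom a := by rwa [hd p₀ hp₀] at hq
          exact hsync q hq' p₀ hp₀
        · intro q hq
          rw [← hsync q hq p₀ hp₀]
          exact (hC'1 q hq).1
      refine ⟨C', hstep, ?_⟩
      have hu' : N.Run dom N.Cinit (u ++ [a]) C' :=
        run_append hu ⟨C', hstep, rfl⟩
      refine main_lemma dom hdom N hWF hS w C' (u ++ [a]) hu' ?_
      intro p
      by_cases hp : p ∈ dom a
      · exact (hC'1 p hp).2
      · rw [hC'2 p hp]
        have := h p
        rwa [proj, if_neg hp] at this

/-- If all projections of a word are complete local paths of a sound deterministic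
negotiation, then the word is a successful execution. -/
theorem proj_paths_imp_lang [Finite P] [Finite A] (dom : A → Set P)
    (hdom : ∀ a, (dom a).Nonempty) (N : Negotiation P A) [Finite N.Node]
    (hWF : N.WellFormed dom) (hS : N.Sound dom) (w : List A)
    (h : ∀ p : P, N.PPath p N.ninit (proj dom p w) N.nfin) :
    N.Lang dom w := by
  exact main_lemma dom hdom N hWF hS w N.Cinit [] rfl h
end

section
/- Let N be a sound deterministic negotiation and let u, t ∈ Act* with ut ∈ L(N) and t co-prime with minimal letter b. Then the configuration C reached by C_init →u C has exactly one enabled node n, and dnode(n) = dom(b). -/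
universe u v w

variable {P : Type u} {A : Type v}

/-!
Write `t = b t'`. By determinism `C` is the configuration from which `b t'` runs to `C_fin`, so
the node `n` executing `b` is enabled in `C` and `dnode n = dom b`. Any other enabled node `m`
either is `nfin`, whose domain meets `dom b`, or must fire on the way to `C_fin`, on a letter `a`
with `dom a = dnode m`; the letters before it avoid `dnode m`, so `a` commutes to the front of
`t`, and co-primality gives `a = b`. Either way `m` shares a process with `n`, so `m = n`.
-/

theorem SwapStep.cons {dom : A → Set P} {u v : List A} (c : A) (h : SwapStep dom u v) :
    SwapStep dom (c :: u) (c :: v) := by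
  obtain ⟨x, y, a, b, hab, rfl, rfl⟩ := h
  exact ⟨c :: x, y, a, b, hab, rfl, rfl⟩

theorem reflTransGen_swapStep_append_cons {dom : A → Set P} {a : A} {w : List A} (r : List A)
    (hw : ∀ c ∈ w, Disjoint (dom c) (dom a)) :
    Relation.ReflTransGen (SwapStep dom) (w ++ a :: r) (a :: (w ++ r)) := by
  induction w with
  | nil => exact .refl
  | cons c w ih =>
    obtain ⟨hc, hw⟩ := List.forall_mem_cons.mp hw
    exact ((ih hw).lift (c :: ·) fun _ _ => SwapStep.cons c).tail
      ⟨[], w ++ r, c, a, Set.disjoint_iff_inter_eq_empty.mp hc, rfl, rfl⟩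

theorem CoPrime.eq_of_disjoint_prefix {dom : A → Set P} {w r : List A} {a b : A}
    (hb : CoPrime dom (w ++ a :: r) b) (hw : ∀ c ∈ w, Disjoint (dom c) (dom a)) : a = b := by
  obtain ⟨v, hv⟩ := hb _ (Relation.EqvGen.reflTransGen_le_eqvGen _ _ _
    (reflTransGen_swapStep_append_cons r hw))
  exact (List.cons_eq_cons.mp hv).1

namespace Negotiation

variable {N : Negotiation P A} {dom : A → Set P} {C C' : P → N.Node} {m n : N.Node}
  {a : A} {p : P}

theorem Enabled.eq_of_mem (hn : N.Enabled n C) (hm : N.Enabled m C)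
    (hpn : p ∈ N.dnode n) (hpm : p ∈ N.dnode m) : n = m :=
  (hn p hpn).symm.trans (hm p hpm)

theorem Enabled.eq_nfin_of_cfin (hWF : N.WellFormed dom) (hm : N.Enabled m N.Cfin) :
    m = N.nfin :=
  let ⟨p, hp⟩ := hWF.1 m
  (hm p hp).symm

theorem Step.enabled_of_disjoint (h : N.Step dom C a C') (hm : N.Enabled m C)
    (hdisj : Disjoint (dom a) (N.dnode m)) : N.Enabled m C' := by
  obtain ⟨-, -, -, hout⟩ := h
  intro q hq
  rw [hout q (hdisj.notMem_of_mem_right hq)]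
  exact hm q hq

theorem Step.exists_enabled_dnode_eq (hWF : N.WellFormed dom) (h : N.Step dom C a C')
    (hp : p ∈ dom a) : ∃ n, N.Enabled n C ∧ N.dnode n = dom a := by
  obtain ⟨n, hn, htr, -⟩ := h
  exact ⟨n, hn, (hWF.2.2.2 _ _ _ _ (htr p hp)).1⟩

theorem Step.dom_eq_dnode_of_enabled (hWF : N.WellFormed dom) (h : N.Step dom C a C')
    (hm : N.Enabled m C) (hpa : p ∈ dom a) (hpm : p ∈ N.dnode m) : dom a = N.dnode m := by
  obtain ⟨n, hn, hdn⟩ := h.exists_enabled_dnode_eq hWF hpa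
  rw [← hdn, hn.eq_of_mem hm (hdn ▸ hpa) hpm]

theorem Step.right_unique (hWF : N.WellFormed dom) {C₁ C₂ : P → N.Node}
    (h₁ : N.Step dom C a C₁) (h₂ : N.Step dom C a C₂) : C₁ = C₂ := by
  funext q
  by_cases hq : q ∈ dom a
  · obtain ⟨n₁, hn₁, htr₁, -⟩ := h₁
    obtain ⟨n₂, hn₂, htr₂, -⟩ := h₂
    have hq₁ : q ∈ N.dnode n₁ := (hWF.2.2.2 _ _ _ _ (htr₁ q hq)).1 ▸ hq
    have hq₂ : q ∈ N.dnode n₂ := (hWF.2.2.2 _ _ _ _ (htr₂ q hq)).1 ▸ hq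
    have htr := htr₁ q hq
    rw [hn₁.eq_of_mem hn₂ hq₁ hq₂, htr₂ q hq] at htr
    exact (Option.some_injective _ htr).symm
  · obtain ⟨-, -, -, hout₁⟩ := h₁
    obtain ⟨-, -, -, hout₂⟩ := h₂
    rw [hout₁ q hq, hout₂ q hq]

theorem Run.right_unique (hWF : N.WellFormed dom) {w : List A} {C₁ C₂ : P → N.Node}
    (h₁ : N.Run dom C w C₁) (h₂ : N.Run dom C w C₂) : C₁ = C₂ := by
  induction w generalizing C with
  | nil => exact h₁.symm.trans h₂
  | cons a w ih =>
    obtain ⟨D₁, hs₁, hr₁⟩ := h₁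
    obtain ⟨D₂, hs₂, hr₂⟩ := h₂
    obtain rfl := hs₁.right_unique hWF hs₂
    exact ih hr₁ hr₂

theorem Run.exists_of_append {u v : List A} (h : N.Run dom C (u ++ v) C') :
    ∃ D, N.Run dom C u D ∧ N.Run dom D v C' := by
  induction u generalizing C with
  | nil => exact ⟨C, rfl, h⟩
  | cons a u ih =>
    obtain ⟨D, hs, hr⟩ := h
    obtain ⟨E, hDE, hEC'⟩ := ih hr
    exact ⟨E, ⟨D, hs, hDE⟩, hEC'⟩

theorem Enabled.eq_nfin_or_fires (hWF : N.WellFormed dom) (hm : N.Enabled m C) {s : List A}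
    (hs : N.Run dom C s N.Cfin) :
    m = N.nfin ∨ ∃ w a r, s = w ++ a :: r ∧
      (∀ c ∈ w, Disjoint (dom c) (N.dnode m)) ∧ dom a = N.dnode m := by
  induction s generalizing C with
  | nil =>
    subst hs
    exact .inl (hm.eq_nfin_of_cfin hWF)
  | cons a s ih =>
    obtain ⟨C', hstep, hr⟩ := hs
    by_cases hdisj : Disjoint (dom a) (N.dnode m)
    · rcases ih (hstep.enabled_of_disjoint hm hdisj) hr with hfin | ⟨w, a', r, rfl, hw, hda⟩
      · exact .inl hfin
      · exact .inr ⟨a :: w, a', r, rfl, List.forall_mem_cons.mpr ⟨hdisj, hw⟩, hda⟩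
    · obtain ⟨p, hpa, hpm⟩ := Set.not_disjoint_iff.mp hdisj
      exact .inr ⟨[], a, s, rfl, List.forall_mem_nil _,
        hstep.dom_eq_dnode_of_enabled hWF hm hpa hpm⟩

end Negotiation

theorem coprime_unique_enabled_node_general (dom : A → Set P)
    (hdom : ∀ a, (dom a).Nonempty) (N : Negotiation P A)
    (hWF : N.WellFormed dom)
    {u t : List A} {b : A}
    (hb : CoPrime dom t b) (h : N.Lang dom (u ++ t))
    {C : P → N.Node} (hC : N.Run dom N.Cinit u C) :
    ∃ n, N.Enabled n C ∧ (∀ m, N.Enabled m C → m = n) ∧ N.dnode n = dom b := by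
  obtain ⟨t, rfl⟩ := hb t (Relation.EqvGen.refl t)
  obtain ⟨D, hD, hDt⟩ := Negotiation.Run.exists_of_append h
  obtain rfl := hD.right_unique hWF hC
  obtain ⟨p, hp⟩ := hdom b
  obtain ⟨C', hstep, -⟩ := id hDt
  obtain ⟨n, hn, hdn⟩ := hstep.exists_enabled_dnode_eq hWF hp
  refine ⟨n, hn, fun m hm => ?_, hdn⟩
  have hpm : p ∈ N.dnode m := by
    rcases hm.eq_nfin_or_fires hWF hDt with rfl | ⟨w, a, r, hwr, hw, hda⟩
    · exact hWF.2.2.1 ▸ Set.mem_univ p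
    · rw [hwr] at hb
      rw [← hda, hb.eq_of_disjoint_prefix (hda ▸ hw)]
      exact hp
  exact hm.eq_of_mem hn hpm (hdn ▸ hp)

/-- If `u·t ∈ L(N)` with `t` co-prime with minimal letter `b`, then the
configuration reached after `u` has exactly one enabled node `n`, with
`dnode n = dom b`. -/
theorem coprime_unique_enabled_node [Finite P] [Finite A] (dom : A → Set P)
    (hdom : ∀ a, (dom a).Nonempty) (N : Negotiation P A) [Finite N.Node]
    (hWF : N.WellFormed dom) (hS : N.Sound dom)
    {u t : List A} {b : A}
    (hb : CoPrime dom t b) (h : N.Lang dom (u ++ t))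
    {C : P → N.Node} (hC : N.Run dom N.Cinit u C) :
    ∃ n, N.Enabled n C ∧ (∀ m, N.Enabled m C → m = n) ∧ N.dnode n = dom b :=
  coprime_unique_enabled_node_general dom hdom N hWF hb h hC
end

section
/- Let A be the minimal DFA accepting Paths(N) for a sound deterministic negotiation N, and N_A the negotiation constructed from A (states become nodes, dnode(s) = dom(a) when some a_p ∈ out(s), δ(s,a,p) = δ_A(s,a_p)). Then L(N) ⊆ L(N_A). -/
universe u v w

variable {P : Type u} {A : Type v}

/-- A DFA with a partial transition function and a single final state. -/
structure PDFA (B : Type v) where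
  S : Type w
  init : S
  trd : S → B → Option S
  fin : S

/-- Run of a partial DFA on a word. -/
def DRun (D : PDFA B) : D.S → List B → D.S → Prop
  | s, [], s' => s = s'
  | s, x :: word, s'' => ∃ s', D.trd s x = some s' ∧ DRun D s' word s''

/-- Acceptance from a state. -/
def AccFrom (D : PDFA B) (s : D.S) (word : List B) : Prop := DRun D s word D.fin

/-- Acceptance of the DFA. -/
def Accepts (D : PDFA B) (word : List B) : Prop := AccFrom D D.init word

/-- Trimmed: every state reachable and co-reachable. -/
def Trimmed (D : PDFA B) : Prop :=
  ∀ s, (∃ word, DRun D D.init word s) ∧ (∃ word, DRun D s word D.fin)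

/-- `D` is (a copy of) the minimal DFA of `L`: it accepts `L`, is trimmed,
and states with equal residual languages are equal (Myhill–Nerode). -/
def PDFAMinimalFor (D : PDFA B) (L : Set (List B)) : Prop :=
  (∀ word, Accepts D word ↔ word ∈ L) ∧ Trimmed D ∧
  ∀ s s', (∀ word, AccFrom D s word ↔ AccFrom D s' word) → s = s'

open Classical in
/-- The negotiation `N_A` associated with a dom-complete DFA over the alphabet `A × P`:
states become nodes, `dnode s = dom a` when some `(a,p)` is outgoing from `s`
(and `Proc` otherwise, in particular at the final state), and transitions are inherited. -/
noncomputable def negOfDFA (dom : A → Set P) (D : PDFA (A × P)) : Negotiation P A where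
  Node := D.S
  dnode := fun s =>
    if h : ∃ x : A × P, (D.trd s x).isSome then dom h.choose.1 else Set.univ
  ninit := D.init
  nfin := D.fin
  tr := fun s a p => D.trd s (a, p)

/-! Since `N` is deterministic, the state that the minimal DFA reaches on the local path of a
process `p` along a reachable execution depends only on the node where `p` stands: both the
state and the node have as residual the local paths from that node to the final node, so by
Myhill–Nerode they determine each other. Hence all processes of an enabled node sit in one DFA
state, whose outgoing letters are those of the node, so its domain in `N_A` is the domain of the
node, and `N_A` run on these per-process DFA states simulates `N` step by step. Soundness makes
every node of a reachable configuration co-reachable, so the DFA can read every such local path. -/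

namespace DRun

variable {B : Type*} {D : PDFA B}

theorem append_iff {s s'' : D.S} {u v : List B} :
    DRun D s (u ++ v) s'' ↔ ∃ s', DRun D s u s' ∧ DRun D s' v s'' := by
  induction u generalizing s with
  | nil => exact ⟨fun h => ⟨s, rfl, h⟩, fun ⟨_, hs, h⟩ => hs ▸ h⟩
  | cons x u ih =>
    simp only [List.cons_append, DRun, ih]
    aesop

theorem unique {s s₁ s₂ : D.S} {u : List B} (h₁ : DRun D s u s₁) (h₂ : DRun D s u s₂) :
    s₁ = s₂ := by
  induction u generalizing s with
  | nil => exact h₁.symm.trans h₂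
  | cons x u ih =>
    obtain ⟨t, ht, h₁⟩ := h₁
    obtain ⟨t', ht', h₂⟩ := h₂
    obtain rfl : t = t' := Option.some_inj.mp (ht.symm.trans ht')
    exact ih h₁ h₂

theorem singleton_iff {s t : D.S} {x : B} : DRun D s [x] t ↔ D.trd s x = some t := by
  simp [DRun]

end DRun

section Residual

variable {B : Type*} {D E : PDFA B}

theorem accFrom_iff_of_accepts_iff (hDE : ∀ w, Accepts D w ↔ Accepts E w) {x : List B}
    {s : D.S} {n : E.S} (hs : DRun D D.init x s) (hn : DRun E E.init x n) (w : List B) :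
    AccFrom D s w ↔ AccFrom E n w := by
  constructor
  · intro h
    obtain ⟨n', hn', hw⟩ := DRun.append_iff.mp ((hDE _).mp (DRun.append_iff.mpr ⟨s, hs, h⟩))
    rwa [hn.unique hn']
  · intro h
    obtain ⟨s', hs', hw⟩ := DRun.append_iff.mp ((hDE _).mpr (DRun.append_iff.mpr ⟨n, hn, h⟩))
    rwa [hs.unique hs']

theorem PDFAMinimalFor.eq_of_dRun {L : Set (List B)} (hmin : PDFAMinimalFor D L)
    (hE : ∀ w, Accepts E w ↔ w ∈ L) {x y : List B} {s s' : D.S} {n : E.S}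
    (hx : DRun D D.init x s) (hy : DRun D D.init y s')
    (hxn : DRun E E.init x n) (hyn : DRun E E.init y n) : s = s' :=
  have hDE w := (hmin.1 w).trans (hE w).symm
  hmin.2.2 s s' fun w =>
    (accFrom_iff_of_accepts_iff hDE hx hxn w).trans (accFrom_iff_of_accepts_iff hDE hy hyn w).symm

theorem isSome_trd_of_accFrom_iff {s : D.S} {n : E.S} (h : ∀ w, AccFrom D s w ↔ AccFrom E n w)
    {x : B} {t : D.S} (ht : D.trd s x = some t) {w : List B} (hw : AccFrom D t w) :
    (E.trd n x).isSome := by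
  obtain ⟨n', hn', -⟩ := (h (x :: w)).mp ⟨t, ht, hw⟩
  simp [hn']

end Residual

noncomputable def tagProj (dom : A → Set P) (p : P) (u : List A) : List (A × P) :=
  (proj dom p u).map (·, p)

@[simp]
theorem tagProj_nil (dom : A → Set P) (p : P) : tagProj dom p [] = [] := rfl

open Classical in
@[simp]
theorem tagProj_cons (dom : A → Set P) (p : P) (a : A) (u : List A) :
    tagProj dom p (a :: u) =
      if p ∈ dom a then (a, p) :: tagProj dom p u else tagProj dom p u := by
  by_cases h : p ∈ dom a <;> simp [tagProj, proj, h]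

@[simp]
theorem tagProj_append (dom : A → Set P) (p : P) (u v : List A) :
    tagProj dom p (u ++ v) = tagProj dom p u ++ tagProj dom p v := by
  induction u with
  | nil => rfl
  | cons a u ih => by_cases h : p ∈ dom a <;> simp [h, ih]

namespace Negotiation

def graphDFA (N : Negotiation P A) : PDFA (A × P) where
  S := N.Node
  init := N.ninit
  trd n x := N.tr n x.1 x.2
  fin := N.nfin

variable {dom : A → Set P} {N : Negotiation P A}

theorem gPath_iff_dRun {n m : N.Node} {w : List (A × P)} :
    N.GPath n w m ↔ DRun N.graphDFA n w m := by
  induction w generalizing n with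
  | nil => rfl
  | cons x w ih => simp only [GPath, DRun, ih]; rfl

theorem accepts_graphDFA_iff {w : List (A × P)} : Accepts N.graphDFA w ↔ w ∈ N.PathsL :=
  gPath_iff_dRun.symm

theorem Run.dRun_tagProj (hWF : N.WellFormed dom) {C C' : P → N.Node} {u : List A}
    (h : N.Run dom C u C') (p : P) : DRun N.graphDFA (C p) (tagProj dom p u) (C' p) := by
  induction u generalizing C with
  | nil => exact congrFun h p
  | cons a u ih =>
    obtain ⟨C₁, ⟨n, hen, htr, hoth⟩, hrun⟩ := h
    by_cases hp : p ∈ dom a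
    · have hCp : C p = n := hen p ((hWF.2.2.2 n a p _ (htr p hp)).1 ▸ hp)
      rw [tagProj_cons, if_pos hp]
      exact ⟨C₁ p, hCp ▸ htr p hp, ih hrun⟩
    · rw [tagProj_cons, if_neg hp, ← hoth p hp]
      exact ih hrun

theorem Run.append {C C' C'' : P → N.Node} {u v : List A} (h₁ : N.Run dom C u C')
    (h₂ : N.Run dom C' v C'') : N.Run dom C (u ++ v) C'' := by
  induction u generalizing C with
  | nil => exact h₁ ▸ h₂
  | cons a u ih =>
    obtain ⟨C₁, hstep, h₁⟩ := h₁
    exact ⟨C₁, hstep, ih h₁⟩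

theorem exists_accFrom_of_run (hWF : N.WellFormed dom) (hS : N.Sound dom) {C : P → N.Node}
    {u : List A} (hu : N.Run dom N.Cinit u C) (p : P) : ∃ y, AccFrom N.graphDFA (C p) y :=
  let ⟨_, hv⟩ := hS u C hu
  ⟨_, hv.dRun_tagProj hWF p⟩

end Negotiation

open Negotiation

def TracksProj (dom : A → Set P) (D : PDFA (A × P)) (u : List A) (σ : P → D.S) : Prop :=
  ∀ p, DRun D D.init (tagProj dom p u) (σ p)

section Simulation

variable {dom : A → Set P} {N : Negotiation P A} {D : PDFA (A × P)}

theorem TracksProj.trd_eq {u : List A} {a : A} {σ σ₁ : P → D.S} (hσ : TracksProj dom D u σ)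
    (hσ₁ : TracksProj dom D (u ++ [a]) σ₁) {q : P} (hq : q ∈ dom a) :
    D.trd (σ q) (a, q) = some (σ₁ q) := by
  have h := hσ₁ q
  simp only [tagProj_append, tagProj_cons, if_pos hq, tagProj_nil] at h
  obtain ⟨t, ht, hstep⟩ := DRun.append_iff.mp h
  rwa [(hσ q).unique ht, ← DRun.singleton_iff]

theorem TracksProj.eq_of_not_mem {u : List A} {a : A} {σ σ₁ : P → D.S}
    (hσ : TracksProj dom D u σ) (hσ₁ : TracksProj dom D (u ++ [a]) σ₁) {q : P}
    (hq : q ∉ dom a) : σ₁ q = σ q := by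
  have h := hσ₁ q
  simp only [tagProj_append, tagProj_cons, if_neg hq, tagProj_nil, List.append_nil] at h
  exact h.unique (hσ q)

theorem exists_tracksProj (hWF : N.WellFormed dom) (hS : N.Sound dom)
    (hmin : PDFAMinimalFor D N.PathsL) {u : List A} {C : P → N.Node}
    (hu : N.Run dom N.Cinit u C) : ∃ σ, TracksProj dom D u σ := by
  suffices ∀ p, ∃ s, DRun D D.init (tagProj dom p u) s from ⟨fun p => (this p).choose,
    fun p => (this p).choose_spec⟩
  intro p
  obtain ⟨y, hy⟩ := exists_accFrom_of_run hWF hS hu p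
  have hacc : Accepts D (tagProj dom p u ++ y) :=
    (hmin.1 _).mpr (accepts_graphDFA_iff.mp (DRun.append_iff.mpr ⟨_, hu.dRun_tagProj hWF p, hy⟩))
  obtain ⟨s, hs, -⟩ := DRun.append_iff.mp hacc
  exact ⟨s, hs⟩

theorem TracksProj.eq_of_eq (hWF : N.WellFormed dom) (hmin : PDFAMinimalFor D N.PathsL)
    {u : List A} {C : P → N.Node} (hu : N.Run dom N.Cinit u C) {σ : P → D.S}
    (hσ : TracksProj dom D u σ) {p q : P} (hpq : C p = C q) : σ p = σ q :=
  hmin.eq_of_dRun (fun _ => accepts_graphDFA_iff) (hσ p) (hσ q) (hu.dRun_tagProj hWF p)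
    (hpq ▸ hu.dRun_tagProj hWF q)

theorem negOfDFA_dnode_eq (hWF : N.WellFormed dom) (htrim : Trimmed D) {s : D.S} {n : N.Node}
    (h : ∀ w, AccFrom D s w ↔ AccFrom N.graphDFA n w) (hout : ∃ x, (D.trd s x).isSome) :
    (negOfDFA dom D).dnode s = N.dnode n := by
  classical
  change (if h : ∃ x, (D.trd s x).isSome then dom h.choose.1 else Set.univ) = N.dnode n
  rw [dif_pos hout]
  obtain ⟨t, ht⟩ := Option.isSome_iff_exists.mp hout.choose_spec
  obtain ⟨w, hw⟩ := (htrim t).2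
  obtain ⟨m, hm⟩ := Option.isSome_iff_exists.mp (isSome_trd_of_accFrom_iff h ht hw)
  exact (hWF.2.2.2 n _ _ m hm).1.symm

theorem step_negOfDFA (hWF : N.WellFormed dom) (hdom : ∀ a, (dom a).Nonempty)
    (hmin : PDFAMinimalFor D N.PathsL) {u : List A} {a : A} {C C₁ : P → N.Node}
    (hu : N.Run dom N.Cinit u C) (hstep : N.Step dom C a C₁) {σ σ₁ : P → D.S}
    (hσ : TracksProj dom D u σ) (hσ₁ : TracksProj dom D (u ++ [a]) σ₁) :
    (negOfDFA dom D).Step dom σ a σ₁ := by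
  obtain ⟨n, hen, htr, hoth⟩ := hstep
  obtain ⟨p₀, hp₀⟩ := hdom a
  have hdn : N.dnode n = dom a := (hWF.2.2.2 n a p₀ _ (htr p₀ hp₀)).1
  have hCn : ∀ q ∈ dom a, C q = n := fun q hq => hen q (hdn ▸ hq)
  have hσq : ∀ q ∈ dom a, σ q = σ p₀ := fun q hq =>
    hσ.eq_of_eq hWF hmin hu ((hCn q hq).trans (hCn p₀ hp₀).symm)
  have hres : ∀ w, AccFrom D (σ p₀) w ↔ AccFrom N.graphDFA n w :=
    accFrom_iff_of_accepts_iff (fun _ => (hmin.1 _).trans accepts_graphDFA_iff.symm) (hσ p₀)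
      (hCn p₀ hp₀ ▸ hu.dRun_tagProj hWF p₀)
  have hdnA : (negOfDFA dom D).dnode (σ p₀) = dom a := by
    rw [negOfDFA_dnode_eq hWF hmin.2.1 hres ⟨(a, p₀), by simp [hσ.trd_eq hσ₁ hp₀]⟩, hdn]
  refine ⟨σ p₀, fun q hq => hσq q (hdnA ▸ hq), fun q hq => ?_, fun q hq => hσ.eq_of_not_mem hσ₁ hq⟩
  rw [← hσq q hq]
  exact hσ.trd_eq hσ₁ hq

theorem run_negOfDFA (hWF : N.WellFormed dom) (hdom : ∀ a, (dom a).Nonempty) (hS : N.Sound dom)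
    (hmin : PDFAMinimalFor D N.PathsL) {w u : List A} {C C' : P → N.Node} {σ σ' : P → D.S}
    (hu : N.Run dom N.Cinit u C) (hσ : TracksProj dom D u σ) (hw : N.Run dom C w C')
    (hσ' : TracksProj dom D (u ++ w) σ') : (negOfDFA dom D).Run dom σ w σ' := by
  induction w generalizing u C σ with
  | nil => exact funext fun p => (hσ p).unique (List.append_nil u ▸ hσ' p)
  | cons a w ih =>
    obtain ⟨C₁, hstep, hw⟩ := hw
    have hu₁ : N.Run dom N.Cinit (u ++ [a]) C₁ := hu.append ⟨C₁, hstep, rfl⟩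
    obtain ⟨σ₁, hσ₁⟩ := exists_tracksProj hWF hS hmin hu₁
    exact ⟨σ₁, step_negOfDFA hWF hdom hmin hu hstep hσ hσ₁,
      ih hu₁ hσ₁ hw (by simpa using hσ')⟩

theorem tracksProj_cfin (hWF : N.WellFormed dom) (hmin : PDFAMinimalFor D N.PathsL)
    {w : List A} (hw : N.Lang dom w) : TracksProj dom D w (negOfDFA dom D).Cfin := fun p =>
  (hmin.1 _).mpr (accepts_graphDFA_iff.mp (hw.dRun_tagProj hWF p))

end Simulation

theorem lang_subset_negOfDFA_general (dom : A → Set P)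
    (hdom : ∀ a, (dom a).Nonempty) (N : Negotiation P A)
    (hWF : N.WellFormed dom)
    (hS : N.Sound dom)
    (D : PDFA (A × P)) (hmin : PDFAMinimalFor D N.PathsL) :
    ∀ w, N.Lang dom w → (negOfDFA dom D).Lang dom w := fun _ hw =>
  run_negOfDFA hWF hdom hS hmin (u := []) (σ := fun _ => D.init) rfl (fun _ => rfl) hw
    (tracksProj_cfin hWF hmin hw)

/-- For the minimal DFA `D` of `Paths(N)` of a sound deterministic negotiation `N`,
every successful execution of `N` is a successful execution of `N_A`. -/
theorem lang_subset_negOfDFA [Finite P] [Finite A] (dom : A → Set P)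
    (hdom : ∀ a, (dom a).Nonempty) (N : Negotiation P A) [Finite N.Node]
    (hWF : N.WellFormed dom)
    (hfin : ∀ a p, N.tr N.nfin a p = none)
    (hS : N.Sound dom)
    (D : PDFA (A × P)) (hmin : PDFAMinimalFor D N.PathsL) :
    ∀ w, N.Lang dom w → (negOfDFA dom D).Lang dom w :=
  lang_subset_negOfDFA_general dom hdom N hWF hS D hmin
end
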